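/- Under the setup of the tridiagonal recurrence roots with γ = d_+ = (√n+√m)²/m and n/m → λ ∈ (0,1], the quantity ω_i := |ρ_i^−|/|ρ_{i−1}^+| satisfies: there exist constants 0 < C₁ < C₂ such that for all sufficiently large n and all 2 ≤ i ≤ n, C₁ √((n−i+1)/n) ≤ 1 − ω_i ≤ C₂ √((n−i+1)/n). -/

import Mathlib

/-!
Put `s = √n`, `t = √m` and `u = n - i + 1`. The quadratic defining `ρ_i^±` becomes
`ρ² + B ρ + (t² - u)(s² - u) = 0` with `B = 2u + 2st - 1`, whose discriminant
`Δ(u) = 4((s + t)² - 1)u - 4st + 1` is of order `t²u`. Both roots are negative, and since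
`B` grows by `2` when `i` drops by one,
`1 - ω_i = (2 + √Δ(u) + √Δ(u + 1)) / (B + 2 + √Δ(u + 1))`.
The numerator is of order `t√u` and the denominator of order `st`, so `1 - ω_i` is of order
`√u / s = √((n - i + 1)/n)`, with absolute constants `2/11` and `7` once `1 ≤ s ≤ t`
and `1 ≤ u ≤ s²`.
-/

open Real Filter

/-- `ρ_i^+` with `γ = d₊ = (√n+√m)²/m` (so `γm = (√n+√m)²`). -/
noncomputable def rhoP (n m i : ℕ) : ℝ :=
  -(1 / 2) * (((Real.sqrt n + Real.sqrt m) ^ 2 - ((m : ℝ) - n + 2 * i - 1)) +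
    Real.sqrt (((Real.sqrt n + Real.sqrt m) ^ 2 - ((m : ℝ) - n + 2 * i - 1)) ^ 2 -
      4 * ((m : ℝ) - n + i - 1) * ((i : ℝ) - 1)))

/-- `ρ_i^-`. -/
noncomputable def rhoM (n m i : ℕ) : ℝ :=
  -(1 / 2) * (((Real.sqrt n + Real.sqrt m) ^ 2 - ((m : ℝ) - n + 2 * i - 1)) -
    Real.sqrt (((Real.sqrt n + Real.sqrt m) ^ 2 - ((m : ℝ) - n + 2 * i - 1)) ^ 2 -
      4 * ((m : ℝ) - n + i - 1) * ((i : ℝ) - 1)))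

def coeffB (s t u : ℝ) : ℝ := 2 * u + 2 * s * t - 1

def rootDisc (s t u : ℝ) : ℝ := 4 * ((s + t) ^ 2 - 1) * u - 4 * s * t + 1

noncomputable def omegaGap (s t u : ℝ) : ℝ :=
  (2 + √(rootDisc s t u) + √(rootDisc s t (u + 1))) /
    (coeffB s t u + 2 + √(rootDisc s t (u + 1)))

section RootBounds

variable {s t u : ℝ}

lemma sq_coeffB_sub_rootDisc :
    coeffB s t u ^ 2 - rootDisc s t u = 4 * (t ^ 2 - u) * (s ^ 2 - u) := by
  unfold coeffB rootDisc; ring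

lemma coeffB_add_one : coeffB s t (u + 1) = coeffB s t u + 2 := by
  unfold coeffB; ring

lemma rootDisc_monotone (h : 1 ≤ s + t) : Monotone (rootDisc s t) := by
  intro u v huv
  have : 0 ≤ 4 * ((s + t) ^ 2 - 1) := by nlinarith
  unfold rootDisc
  nlinarith [mul_le_mul_of_nonneg_left huv this]

lemma sqrt_rootDisc_le_coeffB (hs : 0 ≤ s) (hst : s ≤ t) (hu : 1 ≤ u) (hus : u ≤ s ^ 2) :
    √(rootDisc s t u) ≤ coeffB s t u := by
  have hst0 : 0 ≤ s * t := mul_nonneg hs (hs.trans hst)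
  have hsq : s ^ 2 ≤ t ^ 2 := pow_le_pow_left₀ hs hst 2
  rw [Real.sqrt_le_left (by unfold coeffB; linarith)]
  nlinarith [sq_coeffB_sub_rootDisc (s := s) (t := t) (u := u),
    mul_nonneg (sub_nonneg.2 (hus.trans hsq)) (sub_nonneg.2 hus)]

lemma two_mul_sqrt_le_sqrt_rootDisc (hs : 1 ≤ s) (hst : s ≤ t) (hu : 1 ≤ u) :
    2 * t * √u ≤ √(rootDisc s t u) := by
  have ht : 0 < t := by linarith
  have hsqrt : 0 < √u := Real.sqrt_pos.2 (by linarith)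
  rw [Real.le_sqrt' (by positivity), mul_pow, Real.sq_sqrt (by linarith)]
  have : 0 ≤ 4 * (s ^ 2 + 2 * s * t - 1) := by nlinarith
  unfold rootDisc
  nlinarith [mul_le_mul_of_nonneg_left hu this]

lemma sqrt_rootDisc_add_one_le (hs : 1 ≤ s) (hst : s ≤ t) (hu : 1 ≤ u) :
    √(rootDisc s t (u + 1)) ≤ 6 * t * √u := by
  have ht : 0 ≤ t := by linarith
  rw [Real.sqrt_le_left (by positivity), mul_pow, Real.sq_sqrt (by linarith)]
  unfold rootDisc
  nlinarith [mul_le_mul (show (s + t) ^ 2 - 1 ≤ 4 * t ^ 2 by nlinarith)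
    (show u + 1 ≤ 2 * u by linarith) (by linarith) (by nlinarith)]

lemma omegaGap_bounds (hs : 1 ≤ s) (hst : s ≤ t) (hu : 1 ≤ u) (hus : u ≤ s ^ 2) :
    2 / 11 * (√u / s) ≤ omegaGap s t u ∧ omegaGap s t u ≤ 7 * (√u / s) := by
  set a := √(rootDisc s t u)
  set b := √(rootDisc s t (u + 1))
  have hs0 : 0 < s := by linarith
  have ht0 : 0 < t := by linarith
  have hb0 : 0 ≤ b := Real.sqrt_nonneg _
  have hv1 : 1 ≤ √u := Real.one_le_sqrt.2 hu
  have hvs : √u ≤ s := (Real.sqrt_le_left (by linarith)).2 hus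
  have hst1 : 1 ≤ s * t := by nlinarith
  have htv : 1 ≤ t * √u := by nlinarith
  have ha : 2 * t * √u ≤ a := two_mul_sqrt_le_sqrt_rootDisc hs hst hu
  have hab : a ≤ b := Real.sqrt_le_sqrt (rootDisc_monotone (by linarith) (by linarith))
  have hb : b ≤ 6 * t * √u := sqrt_rootDisc_add_one_le hs hst hu
  have hnum_ge : 2 * (t * √u) ≤ 2 + a + b := by linarith
  have hnum_le : 2 + a + b ≤ 14 * (t * √u) := by linarith
  have hden_ge : 2 * (s * t) ≤ coeffB s t u + 2 + b := by
    unfold coeffB; linarith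
  have hden_le : coeffB s t u + 2 + b ≤ 11 * (s * t) := by
    unfold coeffB; nlinarith [mul_le_mul_of_nonneg_left hvs (show 0 ≤ t by linarith)]
  have hratio : √u / s = t * √u / (s * t) := by field_simp
  rw [hratio]
  constructor
  · calc 2 / 11 * (t * √u / (s * t)) = 2 * (t * √u) / (11 * (s * t)) := by ring
      _ ≤ omegaGap s t u := div_le_div₀ (by linarith) hnum_ge (by linarith) hden_le
  · calc omegaGap s t u ≤ 14 * (t * √u) / (2 * (s * t)) :=
          div_le_div₀ (by positivity) hnum_le (by positivity) hden_ge
      _ = 7 * (t * √u / (s * t)) := by ring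

end RootBounds

lemma coeffB_eq_of_sq {s t N M : ℝ} (I : ℝ) (hs : s ^ 2 = N) (ht : t ^ 2 = M) :
    (s + t) ^ 2 - (M - N + 2 * I - 1) = coeffB s t (N - I + 1) := by
  subst hs ht; unfold coeffB; ring

lemma rootDisc_eq_of_sq {s t N M : ℝ} (I : ℝ) (hs : s ^ 2 = N) (ht : t ^ 2 = M) :
    ((s + t) ^ 2 - (M - N + 2 * I - 1)) ^ 2 - 4 * (M - N + I - 1) * (I - 1) =
      rootDisc s t (N - I + 1) := by
  subst hs ht; unfold rootDisc; ring

lemma rhoP_eq (n m i : ℕ) :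
    rhoP n m i = -(coeffB √n √m (n - i + 1) + √(rootDisc √n √m (n - i + 1))) / 2 := by
  have hn := Real.sq_sqrt (Nat.cast_nonneg (α := ℝ) n)
  have hm := Real.sq_sqrt (Nat.cast_nonneg (α := ℝ) m)
  rw [rhoP, rootDisc_eq_of_sq (i : ℝ) hn hm, coeffB_eq_of_sq (i : ℝ) hn hm]
  ring

lemma rhoM_eq (n m i : ℕ) :
    rhoM n m i = -(coeffB √n √m (n - i + 1) - √(rootDisc √n √m (n - i + 1))) / 2 := by
  have hn := Real.sq_sqrt (Nat.cast_nonneg (α := ℝ) n)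
  have hm := Real.sq_sqrt (Nat.cast_nonneg (α := ℝ) m)
  rw [rhoM, rootDisc_eq_of_sq (i : ℝ) hn hm, coeffB_eq_of_sq (i : ℝ) hn hm]
  ring

lemma one_sub_omega_eq_omegaGap {n m i : ℕ} (hi : 1 ≤ i) (hin : i ≤ n) (hnm : n ≤ m) :
    1 - |rhoM n m i| / |rhoP n m (i - 1)| = omegaGap √n √m (n - i + 1) := by
  have hu : 1 ≤ (n : ℝ) - i + 1 := by
    have : (i : ℝ) ≤ n := by exact_mod_cast hin
    linarith
  have hcast : (n : ℝ) - ((i - 1 : ℕ) : ℝ) + 1 = (n - i + 1) + 1 := by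
    push_cast [Nat.cast_sub hi]; ring
  have hs : 0 ≤ √(n : ℝ) := Real.sqrt_nonneg _
  have hst : √(n : ℝ) ≤ √(m : ℝ) := Real.sqrt_le_sqrt (by exact_mod_cast hnm)
  have hus : (n : ℝ) - i + 1 ≤ √(n : ℝ) ^ 2 := by
    rw [Real.sq_sqrt (Nat.cast_nonneg _)]; linarith
  have hM := sqrt_rootDisc_le_coeffB hs hst hu hus
  have hB : 1 ≤ coeffB √n √m (n - i + 1) := by
    unfold coeffB; nlinarith [mul_nonneg hs (hs.trans hst)]
  have hb := Real.sqrt_nonneg (rootDisc √n √m ((n - i + 1) + 1))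
  rw [rhoM_eq, rhoP_eq, hcast, coeffB_add_one (u := (n : ℝ) - i + 1),
    abs_of_nonpos (by linarith), abs_of_nonpos (by linarith), omegaGap]
  field_simp
  ring

theorem one_sub_omega_bounds_general (m : ℕ → ℕ) (hnm : ∀ n, n ≤ m n) :
    ∃ C₁ C₂ : ℝ, 0 < C₁ ∧ C₁ < C₂ ∧ ∃ N : ℕ, ∀ n ≥ N, ∀ i : ℕ, 2 ≤ i → i ≤ n →
      C₁ * Real.sqrt (((n : ℝ) - i + 1) / n) ≤
          1 - |rhoM n (m n) i| / |rhoP n (m n) (i - 1)| ∧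
      1 - |rhoM n (m n) i| / |rhoP n (m n) (i - 1)| ≤
          C₂ * Real.sqrt (((n : ℝ) - i + 1) / n) := by
  refine ⟨2 / 11, 7, by norm_num, by norm_num, 0, fun n _ i hi hin => ?_⟩
  have hiR : (i : ℝ) ≤ n := by exact_mod_cast hin
  have hi2 : (2 : ℝ) ≤ i := by exact_mod_cast hi
  have hs : 1 ≤ √(n : ℝ) := Real.one_le_sqrt.2 (by exact_mod_cast (by omega : 1 ≤ n))
  have hst : √(n : ℝ) ≤ √(m n : ℝ) := Real.sqrt_le_sqrt (by exact_mod_cast hnm n)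
  have hus : (n : ℝ) - i + 1 ≤ √(n : ℝ) ^ 2 := by
    rw [Real.sq_sqrt (Nat.cast_nonneg _)]; linarith
  rw [one_sub_omega_eq_omegaGap (by omega) hin (hnm n), Real.sqrt_div' _ (Nat.cast_nonneg _)]
  exact omegaGap_bounds hs hst (by linarith) hus

/-- in the regime `n ≤ m`, `n/m → λ ∈ (0,1]`, the quantity
`ω_i = |ρ_i^-|/|ρ_{i-1}^+|` satisfies
`C₁√((n-i+1)/n) ≤ 1 - ω_i ≤ C₂√((n-i+1)/n)` for all large `n` and `2 ≤ i ≤ n`. -/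
theorem one_sub_omega_bounds (l : ℝ) (hl0 : 0 < l) (hl1 : l ≤ 1)
    (m : ℕ → ℕ) (hnm : ∀ n, n ≤ m n)
    (hlim : Tendsto (fun n : ℕ => (n : ℝ) / (m n)) atTop (nhds l)) :
    ∃ C₁ C₂ : ℝ, 0 < C₁ ∧ C₁ < C₂ ∧ ∃ N : ℕ, ∀ n ≥ N, ∀ i : ℕ, 2 ≤ i → i ≤ n →
      C₁ * Real.sqrt (((n : ℝ) - i + 1) / n) ≤
          1 - |rhoM n (m n) i| / |rhoP n (m n) (i - 1)| ∧
      1 - |rhoM n (m n) i| / |rhoP n (m n) (i - 1)| ≤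
          C₂ * Real.sqrt (((n : ℝ) - i + 1) / n) :=
  one_sub_omega_bounds_general m hnm
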